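/- Let D be an arc-colored complete digraph of order 4 that contains no rainbow triangle. If some vertex v of D satisfies d^s(v) ≥ 3, then c(D) ≤ 5. -/

import Mathlib

/-- The number of distinct colors appearing on the arcs `A` under coloring `C`. -/
def colorNum {n : ℕ} (A : Finset (Fin n × Fin n)) (C : Fin n × Fin n → ℕ) : ℕ :=
  (A.image C).card

/-- `A` contains a rainbow (directed) triangle under coloring `C`. -/
def hasRainbowTriangle {n : ℕ} (A : Finset (Fin n × Fin n)) (C : Fin n × Fin n → ℕ) : Prop :=
  ∃ u v w : Fin n, (u, v) ∈ A ∧ (v, w) ∈ A ∧ (w, u) ∈ A ∧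
    C (u, v) ≠ C (v, w) ∧ C (v, w) ≠ C (w, u) ∧ C (w, u) ≠ C (u, v)

/-- The arc set of the complete digraph on `Fin n`. -/
def completeArcs (n : ℕ) : Finset (Fin n × Fin n) :=
  Finset.univ.filter (fun p => p.1 ≠ p.2)

/-- The set of colors saturated by the vertex `v`: colors `k` appearing on some arc such
that every arc colored `k` is incident to `v`. -/
def satColors {n : ℕ} (A : Finset (Fin n × Fin n)) (C : Fin n × Fin n → ℕ)
    (v : Fin n) : Finset ℕ :=
  (A.image C).filter (fun k => ∀ p ∈ A, C p = k → p.1 = v ∨ p.2 = v)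

/-!
A saturated out-color `C (v, x)` and a saturated in-color `C (y, v)` with `x ≠ y` coincide,
because the third arc `(x, y)` of the triangle `v → x → y → v` avoids `v`. Hence three saturated
colors lie all on out-arcs of `v` or all on in-arcs; reversing every arc, we may assume out-arcs,
which then carry three distinct saturated colors. Each remaining arc `(x, y)` is then colored
`C (y, v)`, and the triangle on the three vertices other than `v` forces two in-colors of `v` to
coincide, leaving at most `3 + 2` colors.
-/

open Finset

lemma Finset.exists_mem_ne_ne_of_two_lt_card {α : Type*} [DecidableEq α] {s : Finset α}
    (hs : 2 < s.card) (a b : α) : ∃ c ∈ s, c ≠ a ∧ c ≠ b := by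
  have h₁ := pred_card_le_card_erase (s := s) (a := a)
  have h₂ := pred_card_le_card_erase (s := s.erase a) (a := b)
  obtain ⟨c, hc⟩ := card_pos.mp (show 0 < ((s.erase a).erase b).card by omega)
  obtain ⟨hcb, hca, hc⟩ := by simpa only [mem_erase] using hc
  exact ⟨c, hc, hca, hcb⟩

section

variable {n : ℕ} {C : Fin n × Fin n → ℕ} {v x y z : Fin n} {k : ℕ}

@[simp]
lemma mem_completeArcs {p : Fin n × Fin n} : p ∈ completeArcs n ↔ p.1 ≠ p.2 := by
  simp [completeArcs]

def outColors (C : Fin n × Fin n → ℕ) (v : Fin n) : Finset ℕ :=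
  (univ.erase v).image fun x => C (v, x)

def inColors (C : Fin n × Fin n → ℕ) (v : Fin n) : Finset ℕ :=
  (univ.erase v).image fun x => C (x, v)

@[simp]
lemma mem_outColors : k ∈ outColors C v ↔ ∃ x, x ≠ v ∧ C (v, x) = k := by
  simp [outColors]

@[simp]
lemma mem_inColors : k ∈ inColors C v ↔ ∃ x, x ≠ v ∧ C (x, v) = k := by
  simp [inColors]

lemma swap_mem_completeArcs {p : Fin n × Fin n} :
    p.swap ∈ completeArcs n ↔ p ∈ completeArcs n := by
  simp [ne_comm]

lemma image_swap_completeArcs : (completeArcs n).image Prod.swap = completeArcs n := by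
  ext ⟨x, y⟩
  simp [ne_comm]

lemma image_comp_swap_completeArcs :
    (completeArcs n).image (C ∘ Prod.swap) = (completeArcs n).image C := by
  rw [← image_image, image_swap_completeArcs]

lemma colorNum_comp_swap :
    colorNum (completeArcs n) (C ∘ Prod.swap) = colorNum (completeArcs n) C :=
  congrArg card image_comp_swap_completeArcs

lemma satColors_comp_swap :
    satColors (completeArcs n) (C ∘ Prod.swap) v = satColors (completeArcs n) C v := by
  have incident_iff : ∀ k, (∀ p ∈ completeArcs n, C p.swap = k → p.1 = v ∨ p.2 = v) ↔
      (∀ p ∈ completeArcs n, C p = k → p.1 = v ∨ p.2 = v) := fun k =>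
    ⟨fun h p hp hk => (h p.swap (swap_mem_completeArcs.mpr hp) hk).symm,
      fun h p hp hk => (h p.swap (swap_mem_completeArcs.mpr hp) hk).symm⟩
  ext k
  simp only [satColors, mem_filter, image_comp_swap_completeArcs, Function.comp_apply,
    incident_iff]

lemma hasRainbowTriangle_of_comp_swap
    (h : hasRainbowTriangle (completeArcs n) (C ∘ Prod.swap)) :
    hasRainbowTriangle (completeArcs n) C := by
  obtain ⟨u, v, w, huv, hvw, hwu, h₁, h₂, h₃⟩ := h
  exact ⟨u, w, v, swap_mem_completeArcs.mpr hwu, swap_mem_completeArcs.mpr hvw,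
    swap_mem_completeArcs.mpr huv, h₂.symm, h₁.symm, h₃.symm⟩

lemma satColors_subset_outColors_union_inColors :
    satColors (completeArcs n) C v ⊆ outColors C v ∪ inColors C v := by
  intro k hk
  obtain ⟨⟨⟨a, b⟩, hab, rfl⟩, hinc⟩ := by simpa only [satColors, mem_filter, mem_image] using hk
  rw [mem_completeArcs] at hab
  rcases hinc (a, b) (by simpa using hab) rfl with rfl | rfl
  · exact mem_union_left _ (mem_outColors.mpr ⟨b, hab.symm, rfl⟩)
  · exact mem_union_right _ (mem_inColors.mpr ⟨a, hab, rfl⟩)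

lemma color_ne_of_mem_satColors (hk : k ∈ satColors (completeArcs n) C v) (hx : x ≠ v)
    (hy : y ≠ v) (hxy : x ≠ y) : C (x, y) ≠ k := fun h =>
  ((mem_filter.mp hk).2 (x, y) (by simpa using hxy) h).elim hx hy

lemma eq_or_eq_or_eq_of_not_hasRainbowTriangle (hnr : ¬ hasRainbowTriangle (completeArcs n) C)
    (hxy : x ≠ y) (hyz : y ≠ z) (hzx : z ≠ x) :
    C (x, y) = C (y, z) ∨ C (y, z) = C (z, x) ∨ C (z, x) = C (x, y) := by
  by_contra! h
  exact hnr ⟨x, y, z, by simpa using hxy, by simpa using hyz, by simpa using hzx, h⟩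

lemma out_eq_in_of_mem_satColors (hnr : ¬ hasRainbowTriangle (completeArcs n) C) (hx : x ≠ v)
    (hy : y ≠ v) (hxy : x ≠ y) (hsx : C (v, x) ∈ satColors (completeArcs n) C v)
    (hsy : C (y, v) ∈ satColors (completeArcs n) C v) : C (v, x) = C (y, v) := by
  rcases eq_or_eq_or_eq_of_not_hasRainbowTriangle hnr hx.symm hxy hy with h | h | h
  · exact absurd h.symm (color_ne_of_mem_satColors hsx hx hy hxy)
  · exact absurd h (color_ne_of_mem_satColors hsy hx hy hxy)
  · exact h.symm

lemma satColors_subset_outColors_or_inColors (hnr : ¬ hasRainbowTriangle (completeArcs n) C)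
    (hs : 2 < (satColors (completeArcs n) C v).card) :
    satColors (completeArcs n) C v ⊆ outColors C v ∨
      satColors (completeArcs n) C v ⊆ inColors C v := by
  by_contra! h
  obtain ⟨⟨k, hk, hk_out⟩, ⟨l, hl, hl_in⟩⟩ := And.imp not_subset.mp not_subset.mp h
  have hk_in := (mem_union.mp (satColors_subset_outColors_union_inColors hk)).resolve_left hk_out
  have hl_out := (mem_union.mp (satColors_subset_outColors_union_inColors hl)).resolve_right hl_in
  obtain ⟨y, hy, rfl⟩ := mem_inColors.mp hk_in
  obtain ⟨x, hx, rfl⟩ := mem_outColors.mp hl_out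
  have hlk : C (v, x) ≠ C (y, v) := fun h => hk_out (h ▸ hl_out)
  have hxy : x = y := by
    by_contra hxy
    exact hlk (out_eq_in_of_mem_satColors hnr hx hy hxy hl hk)
  subst hxy
  obtain ⟨m, hm, hmk, hml⟩ := exists_mem_ne_ne_of_two_lt_card hs (C (x, v)) (C (v, x))
  rcases mem_union.mp (satColors_subset_outColors_union_inColors hm) with hm_out | hm_in
  · obtain ⟨z, hz, rfl⟩ := mem_outColors.mp hm_out
    have hzx : z ≠ x := fun h => hml (h ▸ rfl)
    exact hmk (out_eq_in_of_mem_satColors hnr hz hx hzx hm hk)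
  · obtain ⟨z, hz, rfl⟩ := mem_inColors.mp hm_in
    have hxz : x ≠ z := fun h => hmk (h ▸ rfl)
    exact hml (out_eq_in_of_mem_satColors hnr hx hz hxz hl hm).symm

lemma color_eq_in_of_mem_satColors (hnr : ¬ hasRainbowTriangle (completeArcs n) C) (hx : x ≠ v)
    (hy : y ≠ v) (hz : z ≠ v) (hxy : x ≠ y) (hzy : z ≠ y)
    (hsx : C (v, x) ∈ satColors (completeArcs n) C v)
    (hsz : C (v, z) ∈ satColors (completeArcs n) C v) (hxz : C (v, x) ≠ C (v, z)) :
    C (x, y) = C (y, v) := by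
  rcases eq_or_eq_or_eq_of_not_hasRainbowTriangle hnr hx.symm hxy hy with h | h | h
  · exact absurd h.symm (color_ne_of_mem_satColors hsx hx hy hxy)
  · exact h
  · exact absurd ((out_eq_in_of_mem_satColors hnr hz hy hzy hsz (h ▸ hsx)).trans h) hxz.symm

lemma image_subset_outColors_union_inColors
    (hinner : ∀ x y, x ≠ v → y ≠ v → x ≠ y → C (x, y) = C (y, v)) :
    (completeArcs n).image C ⊆ outColors C v ∪ inColors C v := by
  intro k hk
  obtain ⟨⟨x, y⟩, hxy, rfl⟩ := mem_image.mp hk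
  rw [mem_completeArcs] at hxy
  rw [mem_union, mem_outColors, mem_inColors]
  by_cases hx : x = v
  · exact .inl ⟨y, hx ▸ hxy.symm, hx ▸ rfl⟩
  by_cases hy : y = v
  · exact .inr ⟨x, hy ▸ hxy, hy ▸ rfl⟩
  exact .inr ⟨y, hy, (hinner x y hx hy hxy).symm⟩

end

lemma exists_ne_ne_ne (u x y : Fin 4) : ∃ z, z ≠ u ∧ z ≠ x ∧ z ≠ y := by
  revert u x y
  decide

section

variable {C : Fin 4 × Fin 4 → ℕ} {v : Fin 4}

lemma color_eq_in_of_card_outColors (hnr : ¬ hasRainbowTriangle (completeArcs 4) C)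
    (hsat : satColors (completeArcs 4) C v = outColors C v) (hcard : (outColors C v).card = 3)
    (x y : Fin 4) (hx : x ≠ v) (hy : y ≠ v) (hxy : x ≠ y) : C (x, y) = C (y, v) := by
  have hinj : Set.InjOn (fun x => C (v, x)) (univ.erase v) :=
    card_image_iff.mp (hcard.trans (by simp))
  have hsat_out : ∀ x, x ≠ v → C (v, x) ∈ satColors (completeArcs 4) C v := fun x hx =>
    hsat ▸ mem_outColors.mpr ⟨x, hx, rfl⟩
  obtain ⟨z, hzv, hzx, hzy⟩ := exists_ne_ne_ne v x y
  refine color_eq_in_of_mem_satColors hnr hx hy hzv hxy hzy (hsat_out x hx) (hsat_out z hzv)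
    fun h => hzx (hinj ?_ ?_ h).symm <;> simpa

lemma card_inColors_le_two (hnr : ¬ hasRainbowTriangle (completeArcs 4) C)
    (hinner : ∀ x y, x ≠ v → y ≠ v → x ≠ y → C (x, y) = C (y, v)) :
    (inColors C v).card ≤ 2 := by
  obtain ⟨a, hav, -, -⟩ := exists_ne_ne_ne v v v
  obtain ⟨b, hbv, hba, -⟩ := exists_ne_ne_ne v a a
  obtain ⟨c, hcv, hca, hcb⟩ := exists_ne_ne_ne v a b
  have hninj : ¬ Set.InjOn (fun x => C (x, v)) (univ.erase v) := by
    intro hinj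
    have htri := eq_or_eq_or_eq_of_not_hasRainbowTriangle hnr hba.symm hcb.symm hca
    rw [hinner a b hav hbv hba.symm, hinner b c hbv hcv hcb.symm, hinner c a hcv hav hca] at htri
    rcases htri with h | h | h
    · exact hcb (hinj (by simpa) (by simpa) h).symm
    · exact hca (hinj (by simpa) (by simpa) h)
    · exact hba (hinj (by simpa) (by simpa) h).symm
  have hlt := card_image_iff.not.mpr hninj
  have hle := card_image_le (s := univ.erase v) (f := fun x => C (x, v))
  rw [show (univ.erase v).card = 3 by simp] at hlt hle
  unfold inColors
  omega

lemma colorNum_le_five_of_satColors_subset_outColors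
    (hnr : ¬ hasRainbowTriangle (completeArcs 4) C)
    (hs : 3 ≤ (satColors (completeArcs 4) C v).card)
    (hsub : satColors (completeArcs 4) C v ⊆ outColors C v) :
    colorNum (completeArcs 4) C ≤ 5 := by
  have hout : (outColors C v).card ≤ 3 := (by simp : (univ.erase v).card = 3) ▸ card_image_le
  have hsat : satColors (completeArcs 4) C v = outColors C v :=
    eq_of_subset_of_card_le hsub (by omega)
  have hinner := color_eq_in_of_card_outColors hnr hsat (le_antisymm hout (hsat ▸ hs))
  calc colorNum (completeArcs 4) C ≤ (outColors C v ∪ inColors C v).card :=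
        card_le_card (image_subset_outColors_union_inColors hinner)
    _ ≤ (outColors C v).card + (inColors C v).card := card_union_le _ _
    _ ≤ 5 := by linarith [card_inColors_le_two hnr hinner]

end

/-- If an arc-colored complete digraph of order 4 has no rainbow triangle and
some vertex `v` with `dˢ(v) ≥ 3`, then `c(D) ≤ 5`. -/
theorem stmt_15 (C : Fin 4 × Fin 4 → ℕ)
    (hnr : ¬ hasRainbowTriangle (completeArcs 4) C)
    (v : Fin 4) (hs : 3 ≤ (satColors (completeArcs 4) C v).card) :
    colorNum (completeArcs 4) C ≤ 5 := by
  rcases satColors_subset_outColors_or_inColors hnr hs with hout | hin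
  · exact colorNum_le_five_of_satColors_subset_outColors hnr hs hout
  · rw [← satColors_comp_swap] at hs hin
    rw [← colorNum_comp_swap]
    exact colorNum_le_five_of_satColors_subset_outColors
      (mt hasRainbowTriangle_of_comp_swap hnr) hs hin
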